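/- arXiv:quant-ph/0402130 — 2 statements merged into one kernel-verified Lean document; each statement's English description precedes it below -/
import Mathlib

section
/- Compositional CUT Lemma: In a compact closed category, for morphisms f : A → B, g : B → C and h : C → D, one has (ρ_{A*}^{-1} ⊗ 1_{D}) ∘ (1_{A*} ⊗ ⌞g⌟ ⊗ 1_D) ∘ (⌜f⌝ ⊗ ⌜h⌝) ∘ ρ_I = ⌜h ∘ g ∘ f⌝ as morphisms I → A* ⊗ D (where ⌜f⌝ : I → A* ⊗ B, ⌜h⌝ : I → C* ⊗ D, ⌞g⌟ : B ⊗ C* → I, and the evident associativity isomorphisms are inserted). -/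
/-!
Compositional CUT Lemma (Abramsky–Coecke): in a compact closed category, for
f : A ⟶ B, g : B ⟶ C, h : C ⟶ D,
  (ρ_{A*}⁻¹ ⊗ 1_D) ∘ (1_{A*} ⊗ ⌞g⌟ ⊗ 1_D) ∘ (⌜f⌝ ⊗ ⌜h⌝) ∘ ρ_I = ⌜h ∘ g ∘ f⌝
as morphisms I ⟶ A* ⊗ D, with the evident associativity isomorphisms inserted.

Conventions: the dual of A is `ᘁA`, η_A = η_ (ᘁA) A, ε_A = ε_ (ᘁA) A,
⌜f⌝ := (1_{A*} ⊗ f) ∘ η_A : I ⟶ ᘁA ⊗ B, ⌞g⌟ := ε_C ∘ (g ⊗ 1_{C*}) : B ⊗ ᘁC ⟶ I.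
In the paper ρ_X : X ≅ X ⊗ I, so "∘ ρ_I" is `(ρ_ (𝟙_ C)).inv ≫` and
"(ρ_{A*}⁻¹ ⊗ 1_D) ∘" is `≫ ((ρ_ (ᘁA)).hom ▷ D)` in Mathlib conventions.
-/

open CategoryTheory MonoidalCategory

universe v u

variable {C : Type u} [Category.{v} C] [MonoidalCategory C] [SymmetricCategory C]

/-- The name `⌜f⌝ : 𝟙_ C ⟶ ᘁA ⊗ B` of a morphism `f : A ⟶ B`. -/
noncomputable def name {A B : C} [HasLeftDual A] (f : A ⟶ B) : 𝟙_ C ⟶ (ᘁA : C) ⊗ B :=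
  η_ (ᘁA) A ≫ ((ᘁA : C) ◁ f)

/-- The coname `⌞f⌟ : A ⊗ ᘁB ⟶ 𝟙_ C` of a morphism `f : A ⟶ B`. -/
noncomputable def coname {A B : C} [HasLeftDual B] (f : A ⟶ B) : A ⊗ (ᘁB : C) ⟶ 𝟙_ C :=
  (f ▷ (ᘁB : C)) ≫ ε_ (ᘁB) B

theorem compositional_cut {A B D E : C} [HasLeftDual A] [HasLeftDual D]
    (f : A ⟶ B) (g : B ⟶ D) (h : D ⟶ E) :
    (ρ_ (𝟙_ C)).inv ≫ (name f ⊗ₘ name h)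
      ≫ (α_ ((ᘁA : C) ⊗ B) (ᘁD : C) E).inv
      ≫ ((α_ (ᘁA : C) B (ᘁD : C)).hom ▷ E)
      ≫ (((ᘁA : C) ◁ coname g) ▷ E)
      ≫ ((ρ_ (ᘁA : C)).hom ▷ E)
      = name (f ≫ g ≫ h) := by
  simp only [name, coname]
  rw [MonoidalCategory.tensorHom_def]
  slice_lhs 1 2 => rw [← rightUnitor_inv_naturality]
  simp [← whisker_exchange_assoc]
  rw [← whiskerLeft_rightUnitor_inv_assoc]
  simp only [← MonoidalCategory.whiskerLeft_comp, ← MonoidalCategory.whiskerLeft_comp_assoc]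
  congr 1
  congr 1
  simp only [MonoidalCategory.whiskerLeft_comp, Category.assoc]
  slice_lhs 4 5 => rw [associator_inv_naturality_right]
  slice_lhs 5 6 => rw [whisker_exchange]
  slice_lhs 6 7 => rw [whisker_exchange]
  slice_lhs 7 8 => rw [leftUnitor_naturality]
  slice_lhs 4 5 => rw [← associator_inv_naturality_left]
  slice_lhs 3 4 => rw [whisker_exchange]
  slice_lhs 2 3 => rw [← rightUnitor_inv_naturality]
  slice_lhs 4 6 => rw [ExactPairing.coevaluation_evaluation]
  simp
end

section
/- Correctness of logic-gate teleportation for qubits: let f : ℂ² → ℂ² be a linear map and suppose that for each i ∈ {1,2,3,4} there is an invertible linear map φ_i(f) : ℂ² → ℂ² with f ∘ β_i = φ_i(f) ∘ f. Then for every i ∈ {1,2,3,4} and every φ ∈ ℂ², applying the observational branch ⟨b_i| to the first two tensor factors of φ ⊗ Ψ_f, where Ψ_f = (1 ⊗ f)(Φ⁺), and then the correction φ_i(f)^{-1}, yields the gate applied to the input up to the branch weight: φ_i(f)^{-1}((⟨b_i| ⊗ 1)(φ ⊗ Ψ_f)) = (1/2) · f(φ). -/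
/-!
Correctness of logic-gate teleportation for qubits (Abramsky–Coecke): let
f : ℂ² → ℂ² be linear, and suppose each i ∈ {1,2,3,4} has an invertible linear
map φ_i(f) with f ∘ β_i = φ_i(f) ∘ f.  Then with Ψ_f = (1 ⊗ f)(Φ⁺), for every
i and φ: φ_i(f)⁻¹((⟨b_i| ⊗ 1)(φ ⊗ Ψ_f)) = (1/2) · f(φ).
(Invertible linear maps are formalized as linear equivalences `g i`, with
φ_i(f)⁻¹ given by `(g i).symm`.)

ℂ² is `Fin 2 → ℂ`, ℂ² ⊗ ℂ² is `Fin 2 × Fin 2 → ℂ`, ℂ² ⊗ ℂ² ⊗ ℂ² is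
`Fin 2 × Fin 2 × Fin 2 → ℂ`; inner products are conjugate-linear in the first
argument.  The Bell vectors `bell i` and Bell maps `bmap i` are indexed by
`Fin 4` (0-based: `bell 0` is b₁, `bmap 0` is β₁, etc.).
-/

open scoped ComplexConjugate

noncomputable section

/-- Standard basis vector of ℂ² = Fin 2 → ℂ. -/
def e (j : Fin 2) : Fin 2 → ℂ := fun k => if k = j then 1 else 0

/-- Tensor product of two vectors of ℂ². -/
def tp (v w : Fin 2 → ℂ) : Fin 2 × Fin 2 → ℂ := fun p => v p.1 * w p.2

/-- Tensor product φ ⊗ ψ of a vector of ℂ² with a vector of ℂ² ⊗ ℂ². -/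
def tp3 (v : Fin 2 → ℂ) (w : Fin 2 × Fin 2 → ℂ) : Fin 2 × Fin 2 × Fin 2 → ℂ :=
  fun p => v p.1 * w p.2

/-- The EPR state Φ⁺ = (e₀⊗e₀ + e₁⊗e₁)/√2. -/
def Phi : Fin 2 × Fin 2 → ℂ := (Real.sqrt 2 : ℂ)⁻¹ • (tp (e 0) (e 0) + tp (e 1) (e 1))

/-- The Bell basis b₁, b₂, b₃, b₄ (indexed by Fin 4). -/
def bell : Fin 4 → (Fin 2 × Fin 2 → ℂ) :=
  ![(Real.sqrt 2 : ℂ)⁻¹ • (tp (e 0) (e 0) + tp (e 1) (e 1)),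
    (Real.sqrt 2 : ℂ)⁻¹ • (tp (e 0) (e 1) + tp (e 1) (e 0)),
    (Real.sqrt 2 : ℂ)⁻¹ • (tp (e 0) (e 0) - tp (e 1) (e 1)),
    (Real.sqrt 2 : ℂ)⁻¹ • (tp (e 0) (e 1) - tp (e 1) (e 0))]

/-- The Bell maps β₁, β₂, β₃, β₄ as 2×2 complex matrices (indexed by Fin 4). -/
def bmap : Fin 4 → Matrix (Fin 2) (Fin 2) ℂ :=
  ![!![1, 0; 0, 1], !![0, 1; 1, 0], !![1, 0; 0, -1], !![0, -1; 1, 0]]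

/-- The observational branch ⟨b| ⊗ 1 : ℂ²⊗ℂ²⊗ℂ² → ℂ², contracting the first
two tensor factors against b via the inner product. -/
def contract (b : Fin 2 × Fin 2 → ℂ) (ψ : Fin 2 × Fin 2 × Fin 2 → ℂ) : Fin 2 → ℂ :=
  fun c => ∑ j : Fin 2, ∑ k : Fin 2, conj (b (j, k)) * ψ (j, k, c)

/-- Ψ_f = (1 ⊗ f)(Φ⁺). -/
def psiF (f : (Fin 2 → ℂ) →ₗ[ℂ] (Fin 2 → ℂ)) : Fin 2 × Fin 2 → ℂ :=
  fun p => f (fun k => Phi (p.1, k)) p.2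



lemma phi_row (k : Fin 2) : (fun m => Phi (k, m)) = (Real.sqrt 2 : ℂ)⁻¹ • e k := by
  funext m; fin_cases k <;> fin_cases m <;> simp [Phi, tp, e]

lemma psiF_apply (f : (Fin 2 → ℂ) →ₗ[ℂ] (Fin 2 → ℂ)) (k c : Fin 2) :
    psiF f (k, c) = (Real.sqrt 2 : ℂ)⁻¹ * f (e k) c := by
  simp [psiF, phi_row, map_smul]

lemma s2 : (Real.sqrt 2 : ℂ)⁻¹ * (Real.sqrt 2 : ℂ)⁻¹ = (2 : ℂ)⁻¹ := by
  rw [← mul_inv, ← Complex.ofReal_mul, Real.mul_self_sqrt (by norm_num)]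
  norm_num

lemma expand2 (v : Fin 2 → ℂ) : v = v 0 • e 0 + v 1 • e 1 := by
  funext m; fin_cases m <;> simp [e]

lemma contract_eq (f : (Fin 2 → ℂ) →ₗ[ℂ] (Fin 2 → ℂ)) (i : Fin 4) (φ : Fin 2 → ℂ) :
    contract (bell i) (tp3 φ (psiF f)) = (2 : ℂ)⁻¹ • f ((bmap i).mulVec φ) := by
  have key : ∀ (v : Fin 2 → ℂ) (c : Fin 2),
      f v c = v 0 * f (e 0) c + v 1 * f (e 1) c := by
    intro v c
    conv_lhs => rw [expand2 v]
    simp [map_add, map_smul]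
  have hs := s2
  funext c
  fin_cases i
  · rw [Pi.smul_apply, smul_eq_mul, key]
    simp [contract, tp3, psiF_apply, bell, tp, e, Fin.sum_univ_two, Matrix.mulVec,
      dotProduct, bmap, map_mul, map_add, map_sub, map_neg, map_inv₀,
      Complex.conj_ofReal, Prod.ext_iff, mul_add, mul_sub, add_mul, sub_mul]
    linear_combination (φ 0 * f (e 0) c + φ 1 * f (e 1) c) * hs
  · rw [Pi.smul_apply, smul_eq_mul, key]
    simp [contract, tp3, psiF_apply, bell, tp, e, Fin.sum_univ_two, Matrix.mulVec,
      dotProduct, bmap, map_mul, map_add, map_sub, map_neg, map_inv₀,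
      Complex.conj_ofReal, Prod.ext_iff, mul_add, mul_sub, add_mul, sub_mul]
    linear_combination (φ 0 * f (e 1) c + φ 1 * f (e 0) c) * hs
  · rw [Pi.smul_apply, smul_eq_mul, key]
    simp [contract, tp3, psiF_apply, bell, tp, e, Fin.sum_univ_two, Matrix.mulVec,
      dotProduct, bmap, map_mul, map_add, map_sub, map_neg, map_inv₀,
      Complex.conj_ofReal, Prod.ext_iff, mul_add, mul_sub, add_mul, sub_mul]
    linear_combination (φ 0 * f (e 0) c - φ 1 * f (e 1) c) * hs
  · rw [Pi.smul_apply, smul_eq_mul, key]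
    simp [contract, tp3, psiF_apply, bell, tp, e, Fin.sum_univ_two, Matrix.mulVec,
      dotProduct, bmap, map_mul, map_add, map_sub, map_neg, map_inv₀,
      Complex.conj_ofReal, Prod.ext_iff, mul_add, mul_sub, add_mul, sub_mul]
    linear_combination (φ 0 * f (e 1) c - φ 1 * f (e 0) c) * hs

theorem logic_gate_teleportation
    (f : (Fin 2 → ℂ) →ₗ[ℂ] (Fin 2 → ℂ))
    (g : Fin 4 → ((Fin 2 → ℂ) ≃ₗ[ℂ] (Fin 2 → ℂ)))
    (hg : ∀ i : Fin 4,
      f ∘ₗ (bmap i).mulVecLin = ((g i : (Fin 2 → ℂ) →ₗ[ℂ] (Fin 2 → ℂ)) ∘ₗ f)) :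
    ∀ (i : Fin 4) (φ : Fin 2 → ℂ),
      (g i).symm (contract (bell i) (tp3 φ (psiF f))) = (1 / 2 : ℂ) • f φ := by
  intro i φ
  have h := congrFun (congrArg (fun L => L.toFun φ) (hg i)) (0 : Fin 2)
  have h2 : f ((bmap i).mulVec φ) = (g i) (f φ) := by
    have := LinearMap.congr_fun (hg i) φ
    simpa [Matrix.mulVecLin] using this
  rw [contract_eq, h2]
  rw [map_smul, LinearEquiv.symm_apply_apply]
  norm_num


end
end
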